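/- arXiv:2504.04491 — 4 statements merged into one kernel-verified Lean document; each statement's English description precedes it below -/
import Mathlib

section
/- Let G₁, G₂, G₃ and K be polynomials in the real variables x₁, x₂, x₃ such that 2x₁²G₁ + 2x₂²G₂ + 2x₃²G₃ = (x₁² + x₂² + x₃² − 1)·K as polynomials, and suppose K is not the zero polynomial. Then m := max{deg(x₁G₁), deg(x₂G₂), deg(x₃G₃)} satisfies m ≥ 3. (In particular, a three-dimensional polynomial Kolmogorov system ẋᵢ = xᵢGᵢ(x₁,x₂,x₃), i = 1,2,3, possessing the unit sphere S² as an isolated invariant surface must have degree at least 3.) -/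
/-!
Suppose every `xᵢGᵢ` has degree at most 2 and put `S = Σ xᵢ²`, `L = Σ xᵢ²(2Gᵢ)`, so that
`(S - 1) K = L`. Then `L` has degree at most 3 and no monomial of degree below 2.
Since `S` is homogeneous of degree 2, `SK = L + K` has degree `deg K + 2`, which forces
`deg K ≤ 1`. On the other hand `K = SK - L` is a combination of the `xᵢ²`, so `K` has no
monomial of degree below 2 either. Hence `K = 0`.
-/

open MvPolynomial

namespace MvPolynomial

variable {σ R : Type*}

section CommSemiring

variable [CommSemiring R]

theorem coeff_monomial_mul_eq_zero_of_degree_lt {s d : σ →₀ ℕ} (r : R) (p : MvPolynomial σ R)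
    (hd : d.degree < s.degree) : coeff d (monomial s r * p) = 0 := by
  classical
  rw [coeff_monomial_mul', if_neg fun hsd => hd.not_ge (Finsupp.degree_mono hsd)]

theorem coeff_sum_X_sq_mul_eq_zero (s : Finset σ) (f : σ → MvPolynomial σ R) {d : σ →₀ ℕ}
    (hd : d.degree < 2) : coeff d (∑ i ∈ s, X i ^ 2 * f i) = 0 := by
  rw [coeff_sum]
  refine Finset.sum_eq_zero fun i _ => ?_
  rw [X_pow_eq_monomial]
  exact coeff_monomial_mul_eq_zero_of_degree_lt _ _ (by rwa [Finsupp.degree_single])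

theorem totalDegree_X_sq_mul_le [Nontrivial R] (i : σ) (p : MvPolynomial σ R) :
    (X i ^ 2 * p).totalDegree ≤ (X i * p).totalDegree + 1 := by
  rw [sq, mul_assoc, add_comm, ← totalDegree_X (R := R) i]
  exact totalDegree_mul _ _

theorem totalDegree_sum_X_sq [Fintype σ] [Nonempty σ] [Nontrivial R] :
    (∑ i, X i ^ 2 : MvPolynomial σ R).totalDegree = 2 := by
  classical
  refine IsHomogeneous.totalDegree
    (IsHomogeneous.sum _ _ _ fun i _ => isHomogeneous_X_pow i 2) ?_
  obtain ⟨i⟩ := ‹Nonempty σ›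
  rw [ne_zero_iff]
  refine ⟨Finsupp.single i 2, ?_⟩
  simp [coeff_sum, coeff_X_pow, Finsupp.single_left_inj]

end CommSemiring

section CommRing

variable [CommRing R] [IsDomain R] [Fintype σ]

theorem totalDegree_le_of_sum_X_sq_sub_one_mul_eq [Nonempty σ] {K L : MvPolynomial σ R} {n : ℕ}
    (hK : K ≠ 0) (h : (∑ i, X i ^ 2 - 1) * K = L) (hL : L.totalDegree ≤ n + 2) :
    K.totalDegree ≤ n := by
  have hS : (∑ i, X i ^ 2 : MvPolynomial σ R) ≠ 0 := by
    intro h0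
    simpa [h0] using (totalDegree_sum_X_sq (σ := σ) (R := R))
  have hSK := congrArg totalDegree (show (∑ i, X i ^ 2) * K = L + K by rw [← h]; ring)
  rw [totalDegree_mul_of_isDomain hS hK, totalDegree_sum_X_sq] at hSK
  have := totalDegree_add L K
  omega

theorem eq_zero_of_sum_X_sq_mul_eq_sum_X_sq_sub_one_mul [Nonempty σ] (G : σ → MvPolynomial σ R)
    (K : MvPolynomial σ R) (hG : ∀ i, (X i * G i).totalDegree ≤ 2)
    (h : ∑ i, X i ^ 2 * G i = (∑ i, X i ^ 2 - 1) * K) : K = 0 := by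
  by_contra hK
  have hL : (∑ i, X i ^ 2 * G i).totalDegree ≤ 1 + 2 :=
    totalDegree_finsetSum_le fun i _ =>
      (totalDegree_X_sq_mul_le i (G i)).trans (Nat.add_le_add_right (hG i) 1)
  have hdeg := totalDegree_le_of_sum_X_sq_sub_one_mul_eq hK h.symm hL
  apply hK
  ext d
  rw [coeff_zero]
  rcases lt_or_ge d.degree 2 with hd | hd
  · rw [show K = ∑ i, X i ^ 2 * K - ∑ i, X i ^ 2 * G i by rw [h, ← Finset.sum_mul]; ring,
      coeff_sub, coeff_sum_X_sq_mul_eq_zero _ _ hd, coeff_sum_X_sq_mul_eq_zero _ _ hd, sub_zero]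
  · exact coeff_eq_zero_of_totalDegree_lt (by rw [← Finsupp.degree_apply]; omega)

end CommRing

end MvPolynomial

/-- If `2x₁²G₁ + 2x₂²G₂ + 2x₃²G₃ = (x₁²+x₂²+x₃²−1)·K` with `K ≠ 0`, then
`m = max deg(xᵢGᵢ) ≥ 3`; i.e. a Kolmogorov system with the unit sphere as an isolated
invariant surface has degree at least 3. -/
theorem degree_ge_three_of_isolated_invariant_sphere
    (G₁ G₂ G₃ K : MvPolynomial (Fin 3) ℝ)
    (heq : 2 * X 0 ^ 2 * G₁ + 2 * X 1 ^ 2 * G₂ + 2 * X 2 ^ 2 * G₃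
        = (X 0 ^ 2 + X 1 ^ 2 + X 2 ^ 2 - 1) * K)
    (hK : K ≠ 0) :
    3 ≤ max (max (X 0 * G₁ : MvPolynomial (Fin 3) ℝ).totalDegree
          (X 1 * G₂ : MvPolynomial (Fin 3) ℝ).totalDegree)
        (X 2 * G₃ : MvPolynomial (Fin 3) ℝ).totalDegree := by
  by_contra hlt
  simp only [not_le, max_lt_iff] at hlt
  obtain ⟨⟨h₁, h₂⟩, h₃⟩ := hlt
  refine hK (eq_zero_of_sum_X_sq_mul_eq_sum_X_sq_sub_one_mul ((2 : ℝ) • ![G₁, G₂, G₃])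
    K (fun i => ?_) ?_)
  · rw [Pi.smul_apply, mul_smul_comm]
    refine (totalDegree_smul_le _ _).trans ?_
    fin_cases i <;> dsimp <;> omega
  · rw [Fin.sum_univ_three, Fin.sum_univ_three, ← heq]
    simp only [Pi.smul_apply, Matrix.cons_val, smul_eq_C_mul, map_ofNat]
    ring
end

section
/- Consider the cubic Kolmogorov system ẋ₁ = x₁(r₁ + Σᵢ aᵢxᵢ + Σ_{1≤i≤j≤3} a_{ij}xᵢxⱼ), ẋ₂ = x₂(r₂ + Σᵢ bᵢxᵢ + Σ_{1≤i≤j≤3} b_{ij}xᵢxⱼ), ẋ₃ = x₃(r₃ + Σᵢ cᵢxᵢ + Σ_{1≤i≤j≤3} c_{ij}xᵢxⱼ) with real coefficients. There exists a polynomial K(x₁,x₂,x₃) such that 2x₁²(r₁ + Σᵢaᵢxᵢ + Σa_{ij}xᵢxⱼ) + 2x₂²(r₂ + Σᵢbᵢxᵢ + Σb_{ij}xᵢxⱼ) + 2x₃²(r₃ + Σᵢcᵢxᵢ + Σc_{ij}xᵢxⱼ) = (x₁²+x₂²+x₃²−1)·K (i.e., the unit sphere S² is invariant) if and only if: aᵢ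 = bᵢ = cᵢ = 0 for i = 1,2,3; a_{ij} = b_{ij} = c_{ij} = 0 for i ≠ j; a₁₁ = −r₁, a₂₂ = −(r₁+r₂+b₁₁), b₂₂ = −r₂, b₃₃ = −(r₂+r₃+c₂₂), c₁₁ = −(r₁+r₃+a₃₃), c₃₃ = −r₃. Moreover, in this case the cofactor is K = −2r₁x₁² − 2r₂x₂² − 2r₃x₃². -/
open MvPolynomial

/-- The general quadratic polynomial
`r + a₁x₁ + a₂x₂ + a₃x₃ + a₁₁x₁² + a₁₂x₁x₂ + a₁₃x₁x₃ + a₂₂x₂² + a₂₃x₂x₃ + a₃₃x₃²`. -/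
noncomputable def quadG (r a₁ a₂ a₃ a₁₁ a₁₂ a₁₃ a₂₂ a₂₃ a₃₃ : ℝ) :
    MvPolynomial (Fin 3) ℝ :=
  C r + C a₁ * X 0 + C a₂ * X 1 + C a₃ * X 2
    + C a₁₁ * X 0 ^ 2 + C a₁₂ * X 0 * X 1 + C a₁₃ * X 0 * X 2
    + C a₂₂ * X 1 ^ 2 + C a₂₃ * X 1 * X 2 + C a₃₃ * X 2 ^ 2

/-- `sphereInvariance G₁ G₂ G₃ K` says that the unit sphere `x₁²+x₂²+x₃² = 1` is a Darboux
(invariant) surface of the Kolmogorov system `ẋᵢ = xᵢGᵢ` with cofactor `K`, i.e.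
`Σᵢ 2xᵢ²Gᵢ = (x₁²+x₂²+x₃²−1)·K`. -/
def sphereInvariance (G₁ G₂ G₃ K : MvPolynomial (Fin 3) ℝ) : Prop :=
  2 * X 0 ^ 2 * G₁ + 2 * X 1 ^ 2 * G₂ + 2 * X 2 ^ 2 * G₃
    = (X 0 ^ 2 + X 1 ^ 2 + X 2 ^ 2 - 1) * K

/-!
Evaluated at a point `x` of the sphere, the Darboux identity says that `Σᵢ xᵢ²Gᵢ(x) = Q + T + F`
vanishes, where `Q`, `T`, `F` are its homogeneous parts of degrees 2, 3 and 4. Comparing `x` with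
`-x` kills the odd part `T` on the sphere, hence everywhere by homogeneity; then
`F + (x₁² + x₂² + x₃²) Q` is homogeneous of degree 4 and vanishes on the sphere, so it vanishes
identically. The stated conditions are exactly the coefficient comparisons in `T = 0` and
`F = -(x₁² + x₂² + x₃²) Q`, which can be read off on the coordinate planes and at `(±1, ±1, ±1)`.
-/

section Homogeneous

variable {E : Type*} [AddCommGroup E] [Module ℝ E]

def IsHomogeneousOfDegree (k : ℕ) (f : E → ℝ) : Prop :=
  ∀ (t : ℝ) (v : E), f (t • v) = t ^ k * f v

namespace IsHomogeneousOfDegree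

variable {k l : ℕ} {f g : E → ℝ}

theorem add (hf : IsHomogeneousOfDegree k f) (hg : IsHomogeneousOfDegree k g) :
    IsHomogeneousOfDegree k (f + g) := fun t v => by
  simp only [Pi.add_apply, hf t v, hg t v, mul_add]

theorem mul (hf : IsHomogeneousOfDegree k f) (hg : IsHomogeneousOfDegree l g) :
    IsHomogeneousOfDegree (k + l) (f * g) := fun t v => by
  simp only [Pi.mul_apply, hf t v, hg t v]
  ring

theorem apply_neg (hf : IsHomogeneousOfDegree k f) (v : E) : f (-v) = (-1) ^ k * f v := by
  rw [← hf, neg_one_smul]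

end IsHomogeneousOfDegree

end Homogeneous

section Sphere

variable {E : Type*} [NormedAddCommGroup E] [NormedSpace ℝ E]

namespace IsHomogeneousOfDegree

variable {k : ℕ} {f : E → ℝ}

theorem apply_eq_zero_of_forall_norm_eq_one (hf : IsHomogeneousOfDegree k f) (hk : k ≠ 0)
    (h : ∀ u : E, ‖u‖ = 1 → f u = 0) (v : E) : f v = 0 := by
  rcases eq_or_ne v 0 with rfl | hv
  · simpa [zero_pow hk] using hf 0 0
  · have hv' : ‖v‖ ≠ 0 := norm_ne_zero_iff.mpr hv
    have hu : ‖‖v‖⁻¹ • v‖ = 1 := by rw [norm_smul, norm_inv, norm_norm, inv_mul_cancel₀ hv']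
    calc f v = f (‖v‖ • ‖v‖⁻¹ • v) := by rw [smul_inv_smul₀ hv']
      _ = ‖v‖ ^ k * f (‖v‖⁻¹ • v) := hf _ _
      _ = 0 := by rw [h _ hu, mul_zero]

end IsHomogeneousOfDegree

theorem isHomogeneousOfDegree_norm_sq : IsHomogeneousOfDegree 2 (fun v : E => ‖v‖ ^ 2) :=
  fun t v => by simp only [norm_smul, mul_pow, Real.norm_eq_abs, sq_abs]

theorem eq_zero_and_eq_neg_norm_sq_mul_of_forall_norm_eq_one {n : ℕ} {Q T F : E → ℝ}
    (hQ : IsHomogeneousOfDegree n Q) (hT : IsHomogeneousOfDegree (n + 1) T)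
    (hF : IsHomogeneousOfDegree (n + 2) F) (h : ∀ u : E, ‖u‖ = 1 → Q u + T u + F u = 0)
    (v : E) : T v = 0 ∧ F v = -‖v‖ ^ 2 * Q v := by
  have hT_sphere : ∀ u : E, ‖u‖ = 1 → T u = 0 := by
    intro u hu
    have h_neg := h (-u) (by rwa [norm_neg])
    rw [hQ.apply_neg, hT.apply_neg, hF.apply_neg] at h_neg
    have h_anti : Q u - T u + F u = 0 := by
      refine (mul_eq_zero.mp ?_).resolve_left (pow_ne_zero n (neg_ne_zero.mpr one_ne_zero))
      linear_combination h_neg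
    linarith [h u hu]
  have hT_zero := hT.apply_eq_zero_of_forall_norm_eq_one n.succ_ne_zero hT_sphere
  have hG : IsHomogeneousOfDegree (n + 2) (F + Q * fun v => ‖v‖ ^ 2) :=
    hF.add (hQ.mul isHomogeneousOfDegree_norm_sq)
  have hG_zero := hG.apply_eq_zero_of_forall_norm_eq_one (by omega) (fun u hu => by
    simp only [Pi.add_apply, Pi.mul_apply, hu]
    linarith [h u hu, hT_zero u]) v
  simp only [Pi.add_apply, Pi.mul_apply] at hG_zero
  exact ⟨hT_zero v, by linear_combination hG_zero⟩

end Sphere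

theorem binary_cubic_coeffs_eq_zero (α β γ δ : ℝ)
    (h : ∀ x y : ℝ, α * x ^ 3 + β * x ^ 2 * y + γ * x * y ^ 2 + δ * y ^ 3 = 0) :
    α = 0 ∧ β = 0 ∧ γ = 0 ∧ δ = 0 := by
  have h₁ := h 1 0
  have h₂ := h 0 1
  have h₃ := h 1 1
  have h₄ := h 1 (-1)
  norm_num at h₁ h₂ h₃ h₄
  refine ⟨?_, ?_, ?_, ?_⟩ <;> linarith

theorem binary_quartic_coeffs_eq_zero (α β γ δ ε : ℝ)
    (h : ∀ x y : ℝ,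
      α * x ^ 4 + β * x ^ 3 * y + γ * x ^ 2 * y ^ 2 + δ * x * y ^ 3 + ε * y ^ 4 = 0) :
    α = 0 ∧ β = 0 ∧ γ = 0 ∧ δ = 0 ∧ ε = 0 := by
  have h₁ := h 1 0
  have h₂ := h 0 1
  have h₃ := h 1 1
  have h₄ := h 1 (-1)
  have h₅ := h 1 2
  norm_num at h₁ h₂ h₃ h₄ h₅
  refine ⟨?_, ?_, ?_, ?_, ?_⟩ <;> linarith

-- The homogeneous parts of degree 2, 3 and 4 of `Σᵢ xᵢ²Gᵢ` when the `Gᵢ` are `quadG`'s.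
def quadraticPart (r₁ r₂ r₃ x y z : ℝ) : ℝ :=
  r₁ * x ^ 2 + r₂ * y ^ 2 + r₃ * z ^ 2

def cubicPart (a₁ a₂ a₃ b₁ b₂ b₃ c₁ c₂ c₃ x y z : ℝ) : ℝ :=
  x ^ 2 * (a₁ * x + a₂ * y + a₃ * z) + y ^ 2 * (b₁ * x + b₂ * y + b₃ * z)
    + z ^ 2 * (c₁ * x + c₂ * y + c₃ * z)

def quarticPart (a₁₁ a₁₂ a₁₃ a₂₂ a₂₃ a₃₃ b₁₁ b₁₂ b₁₃ b₂₂ b₂₃ b₃₃ c₁₁ c₁₂ c₁₃ c₂₂ c₂₃ c₃₃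
    x y z : ℝ) : ℝ :=
  x ^ 2 * (a₁₁ * x ^ 2 + a₁₂ * x * y + a₁₃ * x * z + a₂₂ * y ^ 2 + a₂₃ * y * z + a₃₃ * z ^ 2)
    + y ^ 2 * (b₁₁ * x ^ 2 + b₁₂ * x * y + b₁₃ * x * z + b₂₂ * y ^ 2 + b₂₃ * y * z + b₃₃ * z ^ 2)
    + z ^ 2 * (c₁₁ * x ^ 2 + c₁₂ * x * y + c₁₃ * x * z + c₂₂ * y ^ 2 + c₂₃ * y * z + c₃₃ * z ^ 2)

section Coefficients

variable {r₁ r₂ r₃ a₁ a₂ a₃ a₁₁ a₁₂ a₁₃ a₂₂ a₂₃ a₃₃ b₁ b₂ b₃ b₁₁ b₁₂ b₁₃ b₂₂ b₂₃ b₃₃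
  c₁ c₂ c₃ c₁₁ c₁₂ c₁₃ c₂₂ c₂₃ c₃₃ : ℝ}

theorem coeffs_eq_zero_of_cubicPart_eq_zero
    (h : ∀ x y z, cubicPart a₁ a₂ a₃ b₁ b₂ b₃ c₁ c₂ c₃ x y z = 0) :
    a₁ = 0 ∧ a₂ = 0 ∧ a₃ = 0 ∧ b₁ = 0 ∧ b₂ = 0 ∧ b₃ = 0 ∧ c₁ = 0 ∧ c₂ = 0 ∧ c₃ = 0 := by
  unfold cubicPart at h
  obtain ⟨ha₁, ha₂, hb₁, hb₂⟩ :=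
    binary_cubic_coeffs_eq_zero a₁ a₂ b₁ b₂ fun x y => by linear_combination h x y 0
  obtain ⟨-, ha₃, hc₁, hc₃⟩ :=
    binary_cubic_coeffs_eq_zero a₁ a₃ c₁ c₃ fun x z => by linear_combination h x 0 z
  obtain ⟨-, hb₃, hc₂, -⟩ :=
    binary_cubic_coeffs_eq_zero b₂ b₃ c₂ c₃ fun y z => by linear_combination h 0 y z
  exact ⟨ha₁, ha₂, ha₃, hb₁, hb₂, hb₃, hc₁, hc₂, hc₃⟩

theorem coeff_conditions_of_quarticPart_eq
    (h : ∀ x y z, quarticPart a₁₁ a₁₂ a₁₃ a₂₂ a₂₃ a₃₃ b₁₁ b₁₂ b₁₃ b₂₂ b₂₃ b₃₃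
      c₁₁ c₁₂ c₁₃ c₂₂ c₂₃ c₃₃ x y z = -(x ^ 2 + y ^ 2 + z ^ 2) * quadraticPart r₁ r₂ r₃ x y z) :
    a₁₂ = 0 ∧ a₁₃ = 0 ∧ a₂₃ = 0 ∧ b₁₂ = 0 ∧ b₁₃ = 0 ∧ b₂₃ = 0 ∧
      c₁₂ = 0 ∧ c₁₃ = 0 ∧ c₂₃ = 0 ∧
      a₁₁ = -r₁ ∧ a₂₂ = -(r₁ + r₂ + b₁₁) ∧ b₂₂ = -r₂ ∧
      b₃₃ = -(r₂ + r₃ + c₂₂) ∧ c₁₁ = -(r₁ + r₃ + a₃₃) ∧ c₃₃ = -r₃ := by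
  unfold quarticPart quadraticPart at h
  obtain ⟨hx, ha₁₂, hxy, hb₁₂, hy⟩ :=
    binary_quartic_coeffs_eq_zero (a₁₁ + r₁) a₁₂ (a₂₂ + b₁₁ + r₁ + r₂) b₁₂ (b₂₂ + r₂)
      fun x y => by linear_combination h x y 0
  obtain ⟨-, ha₁₃, hxz, hc₁₃, hz⟩ :=
    binary_quartic_coeffs_eq_zero (a₁₁ + r₁) a₁₃ (a₃₃ + c₁₁ + r₁ + r₃) c₁₃ (c₃₃ + r₃)
      fun x z => by linear_combination h x 0 z
  obtain ⟨-, hb₂₃, hyz, hc₂₃, -⟩ :=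
    binary_quartic_coeffs_eq_zero (b₂₂ + r₂) b₂₃ (b₃₃ + c₂₂ + r₂ + r₃) c₂₃ (c₃₃ + r₃)
      fun y z => by linear_combination h 0 y z
  -- What is left of the identity is `xyz (a₂₃ x + b₁₃ y + c₁₂ z) = 0`.
  have h₁ := h 1 1 1
  have h₂ := h (-1) 1 1
  have h₃ := h 1 (-1) 1
  have h₄ := h 1 1 (-1)
  norm_num at h₁ h₂ h₃ h₄
  refine ⟨ha₁₂, ha₁₃, ?_, hb₁₂, ?_, hb₂₃, ?_, hc₁₃, hc₂₃, ?_, ?_, ?_, ?_, ?_, ?_⟩ <;> linarith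

theorem quadraticPart_add_cubicPart_add_quarticPart_eq_zero {K : MvPolynomial (Fin 3) ℝ}
    (hK : sphereInvariance (quadG r₁ a₁ a₂ a₃ a₁₁ a₁₂ a₁₃ a₂₂ a₂₃ a₃₃)
      (quadG r₂ b₁ b₂ b₃ b₁₁ b₁₂ b₁₃ b₂₂ b₂₃ b₃₃) (quadG r₃ c₁ c₂ c₃ c₁₁ c₁₂ c₁₃ c₂₂ c₂₃ c₃₃) K)
    {x y z : ℝ} (hs : x ^ 2 + y ^ 2 + z ^ 2 = 1) :
    quadraticPart r₁ r₂ r₃ x y z + cubicPart a₁ a₂ a₃ b₁ b₂ b₃ c₁ c₂ c₃ x y z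
      + quarticPart a₁₁ a₁₂ a₁₃ a₂₂ a₂₃ a₃₃ b₁₁ b₁₂ b₁₃ b₂₂ b₂₃ b₃₃ c₁₁ c₁₂ c₁₃ c₂₂ c₂₃ c₃₃ x y z
      = 0 := by
  have h := congrArg (eval ![x, y, z]) hK
  simp only [quadG, map_add, map_sub, map_mul, map_pow, map_one, map_ofNat, eval_C, eval_X,
    Matrix.cons_val_zero, Matrix.cons_val_one, Matrix.cons_val_two, Matrix.head_cons,
    Matrix.tail_cons] at h
  unfold quadraticPart cubicPart quarticPart
  linear_combination (h + eval ![x, y, z] K * hs) / 2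

theorem cubicPart_eq_zero_and_quarticPart_eq {K : MvPolynomial (Fin 3) ℝ}
    (hK : sphereInvariance (quadG r₁ a₁ a₂ a₃ a₁₁ a₁₂ a₁₃ a₂₂ a₂₃ a₃₃)
      (quadG r₂ b₁ b₂ b₃ b₁₁ b₁₂ b₁₃ b₂₂ b₂₃ b₃₃) (quadG r₃ c₁ c₂ c₃ c₁₁ c₁₂ c₁₃ c₂₂ c₂₃ c₃₃) K) :
    (∀ x y z, cubicPart a₁ a₂ a₃ b₁ b₂ b₃ c₁ c₂ c₃ x y z = 0) ∧
      ∀ x y z, quarticPart a₁₁ a₁₂ a₁₃ a₂₂ a₂₃ a₃₃ b₁₁ b₁₂ b₁₃ b₂₂ b₂₃ b₃₃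
        c₁₁ c₁₂ c₁₃ c₂₂ c₂₃ c₃₃ x y z
        = -(x ^ 2 + y ^ 2 + z ^ 2) * quadraticPart r₁ r₂ r₃ x y z := by
  let onR3 (f : ℝ → ℝ → ℝ → ℝ) (v : EuclideanSpace ℝ (Fin 3)) : ℝ := f (v 0) (v 1) (v 2)
  have norm_sq (v : EuclideanSpace ℝ (Fin 3)) : ‖v‖ ^ 2 = v 0 ^ 2 + v 1 ^ 2 + v 2 ^ 2 := by
    rw [EuclideanSpace.real_norm_sq_eq, Fin.sum_univ_three]
  have key := eq_zero_and_eq_neg_norm_sq_mul_of_forall_norm_eq_one (n := 2)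
    (Q := onR3 (quadraticPart r₁ r₂ r₃)) (T := onR3 (cubicPart a₁ a₂ a₃ b₁ b₂ b₃ c₁ c₂ c₃))
    (F := onR3
      (quarticPart a₁₁ a₁₂ a₁₃ a₂₂ a₂₃ a₃₃ b₁₁ b₁₂ b₁₃ b₂₂ b₂₃ b₃₃ c₁₁ c₁₂ c₁₃ c₂₂ c₂₃ c₃₃))
    (fun t v => by simp only [onR3, quadraticPart, PiLp.smul_apply, smul_eq_mul]; ring)
    (fun t v => by simp only [onR3, cubicPart, PiLp.smul_apply, smul_eq_mul]; ring)
    (fun t v => by simp only [onR3, quarticPart, PiLp.smul_apply, smul_eq_mul]; ring)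
    (fun v hv => quadraticPart_add_cubicPart_add_quarticPart_eq_zero hK
      (by rw [← norm_sq, hv, one_pow]))
  refine ⟨fun x y z => ?_, fun x y z => ?_⟩
  · simpa [onR3] using (key !₂[x, y, z]).1
  · simpa [onR3, norm_sq] using (key !₂[x, y, z]).2

theorem sphereInvariance_of_coeff_conditions
    (h : a₁ = 0 ∧ a₂ = 0 ∧ a₃ = 0 ∧ b₁ = 0 ∧ b₂ = 0 ∧ b₃ = 0 ∧
       c₁ = 0 ∧ c₂ = 0 ∧ c₃ = 0 ∧
       a₁₂ = 0 ∧ a₁₃ = 0 ∧ a₂₃ = 0 ∧ b₁₂ = 0 ∧ b₁₃ = 0 ∧ b₂₃ = 0 ∧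
       c₁₂ = 0 ∧ c₁₃ = 0 ∧ c₂₃ = 0 ∧
       a₁₁ = -r₁ ∧ a₂₂ = -(r₁ + r₂ + b₁₁) ∧ b₂₂ = -r₂ ∧
       b₃₃ = -(r₂ + r₃ + c₂₂) ∧ c₁₁ = -(r₁ + r₃ + a₃₃) ∧ c₃₃ = -r₃) :
    sphereInvariance (quadG r₁ a₁ a₂ a₃ a₁₁ a₁₂ a₁₃ a₂₂ a₂₃ a₃₃)
      (quadG r₂ b₁ b₂ b₃ b₁₁ b₁₂ b₁₃ b₂₂ b₂₃ b₃₃) (quadG r₃ c₁ c₂ c₃ c₁₁ c₁₂ c₁₃ c₂₂ c₂₃ c₃₃)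
      (C (-2 * r₁) * X 0 ^ 2 + C (-2 * r₂) * X 1 ^ 2 + C (-2 * r₃) * X 2 ^ 2) := by
  obtain ⟨rfl, rfl, rfl, rfl, rfl, rfl, rfl, rfl, rfl, rfl, rfl, rfl, rfl, rfl, rfl, rfl,
    rfl, rfl, rfl, rfl, rfl, rfl, rfl, rfl⟩ := h
  simp only [sphereInvariance, quadG, map_neg, map_add, map_mul, map_zero, map_ofNat]
  ring

end Coefficients

/-- The cubic Kolmogorov system `ẋᵢ = xᵢGᵢ` with general quadratic `Gᵢ`'s admits the unit
sphere as an invariant surface (for some cofactor `K`) iff the coefficients satisfy the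
stated conditions; moreover, in that case the cofactor is `K = −2r₁x₁² − 2r₂x₂² − 2r₃x₃²`. -/
theorem invariant_sphere_iff_coeff_conditions (r₁ r₂ r₃ a₁ a₂ a₃ a₁₁ a₁₂ a₁₃ a₂₂ a₂₃ a₃₃ b₁ b₂ b₃ b₁₁ b₁₂ b₁₃ b₂₂ b₂₃ b₃₃ c₁ c₂ c₃ c₁₁ c₁₂ c₁₃ c₂₂ c₂₃ c₃₃ : ℝ) :
    ((∃ K, sphereInvariance (quadG r₁ a₁ a₂ a₃ a₁₁ a₁₂ a₁₃ a₂₂ a₂₃ a₃₃)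
        (quadG r₂ b₁ b₂ b₃ b₁₁ b₁₂ b₁₃ b₂₂ b₂₃ b₃₃)
        (quadG r₃ c₁ c₂ c₃ c₁₁ c₁₂ c₁₃ c₂₂ c₂₃ c₃₃) K) ↔
      (a₁ = 0 ∧ a₂ = 0 ∧ a₃ = 0 ∧ b₁ = 0 ∧ b₂ = 0 ∧ b₃ = 0 ∧
       c₁ = 0 ∧ c₂ = 0 ∧ c₃ = 0 ∧
       a₁₂ = 0 ∧ a₁₃ = 0 ∧ a₂₃ = 0 ∧ b₁₂ = 0 ∧ b₁₃ = 0 ∧ b₂₃ = 0 ∧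
       c₁₂ = 0 ∧ c₁₃ = 0 ∧ c₂₃ = 0 ∧
       a₁₁ = -r₁ ∧ a₂₂ = -(r₁ + r₂ + b₁₁) ∧ b₂₂ = -r₂ ∧
       b₃₃ = -(r₂ + r₃ + c₂₂) ∧ c₁₁ = -(r₁ + r₃ + a₃₃) ∧ c₃₃ = -r₃))
    ∧ ((a₁ = 0 ∧ a₂ = 0 ∧ a₃ = 0 ∧ b₁ = 0 ∧ b₂ = 0 ∧ b₃ = 0 ∧
       c₁ = 0 ∧ c₂ = 0 ∧ c₃ = 0 ∧
       a₁₂ = 0 ∧ a₁₃ = 0 ∧ a₂₃ = 0 ∧ b₁₂ = 0 ∧ b₁₃ = 0 ∧ b₂₃ = 0 ∧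
       c₁₂ = 0 ∧ c₁₃ = 0 ∧ c₂₃ = 0 ∧
       a₁₁ = -r₁ ∧ a₂₂ = -(r₁ + r₂ + b₁₁) ∧ b₂₂ = -r₂ ∧
       b₃₃ = -(r₂ + r₃ + c₂₂) ∧ c₁₁ = -(r₁ + r₃ + a₃₃) ∧ c₃₃ = -r₃) →
        sphereInvariance (quadG r₁ a₁ a₂ a₃ a₁₁ a₁₂ a₁₃ a₂₂ a₂₃ a₃₃)
        (quadG r₂ b₁ b₂ b₃ b₁₁ b₁₂ b₁₃ b₂₂ b₂₃ b₃₃)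
        (quadG r₃ c₁ c₂ c₃ c₁₁ c₁₂ c₁₃ c₂₂ c₂₃ c₃₃)
          (C (-2 * r₁) * X 0 ^ 2 + C (-2 * r₂) * X 1 ^ 2 + C (-2 * r₃) * X 2 ^ 2)) := by
  refine ⟨⟨fun ⟨K, hK⟩ => ?_, fun h => ⟨_, sphereInvariance_of_coeff_conditions h⟩⟩,
    sphereInvariance_of_coeff_conditions⟩
  obtain ⟨hcubic, hquartic⟩ := cubicPart_eq_zero_and_quarticPart_eq hK
  obtain ⟨ha₁, ha₂, ha₃, hb₁, hb₂, hb₃, hc₁, hc₂, hc₃⟩ :=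
    coeffs_eq_zero_of_cubicPart_eq_zero hcubic
  exact ⟨ha₁, ha₂, ha₃, hb₁, hb₂, hb₃, hc₁, hc₂, hc₃, coeff_conditions_of_quarticPart_eq hquartic⟩
end

section
/- Assume α₁ ≥ α₂ ≥ α₃ > 0, d₁ ≤ 0, d₃ ≤ 0 and α₁ + α₃ + d₂ ≥ 0. Let B be the 3×3 matrix with rows B₁ = (−α₁, −(α₁+α₂+d₁), d₂), B₂ = (d₁, −α₂, −(α₂+α₃+d₃)), B₃ = (−(α₃+α₁+d₂), d₃, −α₃). Then for all real numbers m₁ ≥ m₂ ≥ m₃ > 0 and all y = (y₁,y₂,y₃) ∈ ℝ³, Σᵢ yᵢ²·(Σⱼ mⱼ·Bᵢⱼ·yⱼ²) ≤ −m₃·(y₁²+y₂²+y₃²)·(α₁y₁² + α₂y₂² + α₃y₃²) ≤ −m₃·α₃·(y₁²+y₂²+y₃²)². -/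
/-!
With `uᵢ = yᵢ² ≥ 0`, the gap between `−m₃(u₁+u₂+u₃)(α₁u₁+α₂u₂+α₃u₃)` and the form
`Σᵢⱼ uᵢmⱼBᵢⱼuⱼ` is a quadratic polynomial in `u` whose coefficients are sums of products of the
nonnegative quantities `mᵢ − mⱼ` (`i < j`), `αᵢ`, `−d₁`, `−d₃` and `α₁ + α₃ + d₂`; its `u₃²`
coefficient vanishes. The second inequality is just `α₁, α₂ ≥ α₃`.
-/

/-- The matrix of cubic interaction coefficients of the Kolmogorov system
`ẏᵢ = yᵢ(αᵢ + Σⱼ Bᵢⱼ yⱼ²)`. -/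
def Bmat (α₁ α₂ α₃ d₁ d₂ d₃ : ℝ) : Matrix (Fin 3) (Fin 3) ℝ :=
  !![-α₁, -(α₁ + α₂ + d₁), d₂;
     d₁, -α₂, -(α₂ + α₃ + d₃);
     -(α₃ + α₁ + d₂), d₃, -α₃]

section WeightedForm

variable (α₁ α₂ α₃ d₁ d₂ d₃ : ℝ) (m u : Fin 3 → ℝ)

theorem neg_weighted_sum_sub_Bmat_form :
    -(m 2) * (u 0 + u 1 + u 2) * (α₁ * u 0 + α₂ * u 1 + α₃ * u 2)
        - ∑ i, u i * ∑ j, m j * Bmat α₁ α₂ α₃ d₁ d₂ d₃ i j * u j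
      = (m 0 - m 2) * α₁ * u 0 ^ 2 + (m 1 - m 2) * α₂ * u 1 ^ 2
        + ((m 1 - m 2) * (α₁ + α₂) + (m 0 - m 1) * -d₁) * (u 0 * u 1)
        + (m 0 - m 2) * (α₁ + α₃ + d₂) * (u 0 * u 2)
        + (m 1 - m 2) * -d₃ * (u 1 * u 2) := by
  simp only [Bmat, Fin.sum_univ_three, Matrix.of_apply, Matrix.cons_val_zero, Matrix.cons_val_one,
    Matrix.cons_val_two, Matrix.head_cons, Matrix.tail_cons]
  ring

variable {α₁ α₂ α₃ d₁ d₂ d₃ m u}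

theorem Bmat_form_le_neg_weighted_sum (h12 : α₂ ≤ α₁) (h2 : 0 ≤ α₂)
    (hd1 : d₁ ≤ 0) (hd3 : d₃ ≤ 0) (hd2 : 0 ≤ α₁ + α₃ + d₂)
    (hm01 : m 1 ≤ m 0) (hm12 : m 2 ≤ m 1) (hu : ∀ i, 0 ≤ u i) :
    ∑ i, u i * ∑ j, m j * Bmat α₁ α₂ α₃ d₁ d₂ d₃ i j * u j
      ≤ -(m 2) * (u 0 + u 1 + u 2) * (α₁ * u 0 + α₂ * u 1 + α₃ * u 2) := by
  have hm02 : 0 ≤ m 0 - m 2 := by linarith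
  have hm12' : 0 ≤ m 1 - m 2 := sub_nonneg.2 hm12
  have hm01' : 0 ≤ m 0 - m 1 := sub_nonneg.2 hm01
  rw [← sub_nonneg, neg_weighted_sum_sub_Bmat_form]
  have := hu 0; have := hu 1; have := hu 2
  have h1 : 0 ≤ α₁ := h2.trans h12
  have h01 : 0 ≤ (m 1 - m 2) * (α₁ + α₂) + (m 0 - m 1) * -d₁ := by
    have := neg_nonneg.2 hd1
    positivity
  have := neg_nonneg.2 hd3
  positivity

theorem neg_weighted_sum_le (hm : 0 ≤ m 2) (h13 : α₃ ≤ α₁) (h23 : α₃ ≤ α₂)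
    (hu : ∀ i, 0 ≤ u i) :
    -(m 2) * (u 0 + u 1 + u 2) * (α₁ * u 0 + α₂ * u 1 + α₃ * u 2)
      ≤ -(m 2) * α₃ * (u 0 + u 1 + u 2) ^ 2 := by
  have hS : 0 ≤ u 0 + u 1 + u 2 := by linarith [hu 0, hu 1, hu 2]
  have hα : α₃ * (u 0 + u 1 + u 2) ≤ α₁ * u 0 + α₂ * u 1 + α₃ * u 2 := by
    nlinarith [mul_le_mul_of_nonneg_right h13 (hu 0), mul_le_mul_of_nonneg_right h23 (hu 1)]
  have := mul_le_mul_of_nonneg_left hα (mul_nonneg hm hS)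
  linarith

end WeightedForm

/-- The key algebraic Lyapunov estimate behind the Doss–Sussmann analysis: for weights
`m₁ ≥ m₂ ≥ m₃ > 0`,
`Σᵢ yᵢ²(Σⱼ mⱼBᵢⱼyⱼ²) ≤ −m₃‖y‖²(α₁y₁²+α₂y₂²+α₃y₃²) ≤ −m₃α₃‖y‖⁴`. -/
theorem weighted_lyapunov_estimate (α₁ α₂ α₃ d₁ d₂ d₃ : ℝ)
    (h12 : α₂ ≤ α₁) (h23 : α₃ ≤ α₂) (h3 : 0 < α₃)
    (hd1 : d₁ ≤ 0) (hd3 : d₃ ≤ 0) (hd2 : 0 ≤ α₁ + α₃ + d₂)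
    (m : Fin 3 → ℝ) (hm01 : m 1 ≤ m 0) (hm12 : m 2 ≤ m 1) (hm2 : 0 < m 2)
    (y : Fin 3 → ℝ) :
    (∑ i, y i ^ 2 * ∑ j, m j * Bmat α₁ α₂ α₃ d₁ d₂ d₃ i j * y j ^ 2)
        ≤ -(m 2) * ((y 0) ^ 2 + (y 1) ^ 2 + (y 2) ^ 2)
            * (α₁ * (y 0) ^ 2 + α₂ * (y 1) ^ 2 + α₃ * (y 2) ^ 2)
    ∧ -(m 2) * ((y 0) ^ 2 + (y 1) ^ 2 + (y 2) ^ 2)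
            * (α₁ * (y 0) ^ 2 + α₂ * (y 1) ^ 2 + α₃ * (y 2) ^ 2)
        ≤ -(m 2) * α₃ * ((y 0) ^ 2 + (y 1) ^ 2 + (y 2) ^ 2) ^ 2 := by
  have hu : ∀ i, 0 ≤ y i ^ 2 := fun i => sq_nonneg (y i)
  exact ⟨Bmat_form_le_neg_weighted_sum h12 (h3.le.trans h23) hd1 hd3 hd2 hm01 hm12 hu,
    neg_weighted_sum_le hm2.le (h23.trans h12) h23 hu⟩
end

section
/- Assume α₁ ≥ α₂ ≥ α₃ > 0, d₁ ≤ 0, d₃ ≤ 0 and α₁ + α₃ + d₂ ≥ 0. Let B be the 3×3 matrix with rows B₁ = (−α₁, −(α₁+α₂+d₁), d₂), B₂ = (d₁, −α₂, −(α₂+α₃+d₃)), B₃ = (−(α₃+α₁+d₂), d₃, −α₃). Let m₁, m₂, m₃ : [0,∞) → ℝ be continuous with m₁(t) ≥ m₂(t) ≥ m₃(t) > 0 for all t ≥ 0, and let y : [0,∞) → ℝ³ be differentiable with yᵢ'(t) = yᵢ(t)·(Σⱼ mⱼ(t)·Bᵢⱼ·yⱼ(t)²) for i = 1,2,3 and all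 t ≥ 0. Then t ↦ ‖y(t)‖² is nonincreasing on [0,∞); in particular sup_{t≥0} ‖y(t)‖ ≤ ‖y(0)‖ < ∞. -/
open Set

theorem hasDerivAt_euclidean_norm_sq {ι : Type*} [Fintype ι] {y : ℝ → EuclideanSpace ℝ ι}
    {y' : ι → ℝ} {t : ℝ} (hy : ∀ i, HasDerivAt (fun s => y s i) (y' i) t) :
    HasDerivAt (fun s => ‖y s‖ ^ 2) (∑ i, 2 * y t i * y' i) t := by
  have h := HasDerivAt.fun_sum (u := Finset.univ) fun i _ => (hy i).pow 2
  simp only [Nat.cast_ofNat, Nat.add_one_sub_one, pow_one] at h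
  rwa [show (fun s => ‖y s‖ ^ 2) = fun s => ∑ i, y s i ^ 2 from
    funext fun s => EuclideanSpace.real_norm_sq_eq (y s)]

theorem Bmat_weighted_form_nonpos {α₁ α₂ α₃ d₁ d₂ d₃ : ℝ}
    (h12 : α₂ ≤ α₁) (h23 : α₃ ≤ α₂) (h3 : 0 ≤ α₃)
    (hd1 : d₁ ≤ 0) (hd3 : d₃ ≤ 0) (hd2 : 0 ≤ α₁ + α₃ + d₂)
    {a u : Fin 3 → ℝ} (ha01 : a 1 ≤ a 0) (ha12 : a 2 ≤ a 1) (ha2 : 0 ≤ a 2)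
    (hu : ∀ i, 0 ≤ u i) :
    ∑ i, u i * ∑ j, a j * Bmat α₁ α₂ α₃ d₁ d₂ d₃ i j * u j ≤ 0 := by
  have hform : ∑ i, u i * ∑ j, a j * Bmat α₁ α₂ α₃ d₁ d₂ d₃ i j * u j =
      -(a 0 * α₁ * u 0 ^ 2 + a 1 * α₂ * u 1 ^ 2 + a 2 * α₃ * u 2 ^ 2)
      - u 0 * u 1 * (a 1 * (α₁ + α₂) + (a 0 - a 1) * -d₁)
      - u 1 * u 2 * (a 2 * (α₂ + α₃) + (a 1 - a 2) * -d₃)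
      - u 0 * u 2 * (a 2 * (α₁ + α₃) + (a 0 - a 2) * (α₁ + α₃ + d₂)) := by
    simp only [Bmat, Fin.sum_univ_three, Matrix.of_apply, Matrix.cons_val', Matrix.cons_val_fin_one,
      Matrix.cons_val_zero, Matrix.cons_val_one, Matrix.cons_val]
    ring
  have ha1 : 0 ≤ a 1 := ha2.trans ha12
  have ha0 : 0 ≤ a 0 := ha1.trans ha01
  have hα₂ : 0 ≤ α₂ := h3.trans h23
  have hα₁ : 0 ≤ α₁ := hα₂.trans h12
  have hdiag : 0 ≤ a 0 * α₁ * u 0 ^ 2 + a 1 * α₂ * u 1 ^ 2 + a 2 * α₃ * u 2 ^ 2 := by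
    positivity
  have huv : 0 ≤ u 0 * u 1 * (a 1 * (α₁ + α₂) + (a 0 - a 1) * -d₁) :=
    mul_nonneg (mul_nonneg (hu 0) (hu 1)) <|
      add_nonneg (mul_nonneg ha1 (by linarith)) (mul_nonneg (by linarith) (by linarith))
  have hvw : 0 ≤ u 1 * u 2 * (a 2 * (α₂ + α₃) + (a 1 - a 2) * -d₃) :=
    mul_nonneg (mul_nonneg (hu 1) (hu 2)) <|
      add_nonneg (mul_nonneg ha2 (by linarith)) (mul_nonneg (by linarith) (by linarith))
  have huw : 0 ≤ u 0 * u 2 * (a 2 * (α₁ + α₃) + (a 0 - a 2) * (α₁ + α₃ + d₂)) :=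
    mul_nonneg (mul_nonneg (hu 0) (hu 2)) <|
      add_nonneg (mul_nonneg ha2 (by linarith)) (mul_nonneg (by linarith) hd2)
  linarith

theorem transformed_norm_nonincreasing_general (α₁ α₂ α₃ d₁ d₂ d₃ : ℝ)
    (h12 : α₂ ≤ α₁) (h23 : α₃ ≤ α₂) (h3 : 0 < α₃)
    (hd1 : d₁ ≤ 0) (hd3 : d₃ ≤ 0) (hd2 : 0 ≤ α₁ + α₃ + d₂)
    (m : Fin 3 → ℝ → ℝ)
    (hm01 : ∀ t : ℝ, 0 ≤ t → m 1 t ≤ m 0 t) (hm12 : ∀ t : ℝ, 0 ≤ t → m 2 t ≤ m 1 t)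
    (hm2 : ∀ t : ℝ, 0 ≤ t → 0 < m 2 t)
    (y : ℝ → EuclideanSpace ℝ (Fin 3))
    (hy : ∀ i, ∀ t : ℝ, 0 ≤ t →
      HasDerivAt (fun s => y s i)
        (y t i * ∑ j, m j t * Bmat α₁ α₂ α₃ d₁ d₂ d₃ i j * (y t j) ^ 2) t) :
    AntitoneOn (fun t => ‖y t‖ ^ 2) (Set.Ici (0 : ℝ)) ∧
      ∀ t : ℝ, 0 ≤ t → ‖y t‖ ≤ ‖y 0‖ := by
  set Q : ℝ → ℝ := fun t => ∑ i, y t i ^ 2 * ∑ j, m j t * Bmat α₁ α₂ α₃ d₁ d₂ d₃ i j * y t j ^ 2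
  have hderiv : ∀ t ∈ Ici (0 : ℝ), HasDerivAt (fun s => ‖y s‖ ^ 2) (2 * Q t) t := fun t ht =>
    (hasDerivAt_euclidean_norm_sq (hy · t ht)).congr_deriv <| by
      simp only [Q, Finset.mul_sum]; congr 1 with i; congr 1 with j; ring
  have hQ : ∀ t ∈ Ici (0 : ℝ), Q t ≤ 0 := fun t ht =>
    Bmat_weighted_form_nonpos h12 h23 h3.le hd1 hd3 hd2 (hm01 t ht) (hm12 t ht) (hm2 t ht).le
      fun i => sq_nonneg (y t i)
  have hanti : AntitoneOn (fun t => ‖y t‖ ^ 2) (Ici 0) :=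
    antitoneOn_of_hasDerivWithinAt_nonpos (convex_Ici 0)
      (fun t ht => (hderiv t ht).continuousAt.continuousWithinAt)
      (fun t ht => (hderiv t (interior_subset ht)).hasDerivWithinAt)
      (fun t ht => by linarith [hQ t (interior_subset ht)])
  refine ⟨hanti, fun t ht => ?_⟩
  exact (pow_le_pow_iff_left₀ (norm_nonneg _) (norm_nonneg _) two_ne_zero).1
    (hanti self_mem_Ici ht ht)

/-- Along solutions of the transformed system `ẏᵢ = yᵢ Σⱼ mⱼ(t)Bᵢⱼyⱼ²` with weights
`m₁(t) ≥ m₂(t) ≥ m₃(t) > 0`, the squared Euclidean norm `‖y(t)‖²` is nonincreasing on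
`[0,∞)`; in particular `sup_t ‖y(t)‖ ≤ ‖y(0)‖ < ∞`. -/
theorem transformed_norm_nonincreasing (α₁ α₂ α₃ d₁ d₂ d₃ : ℝ)
    (h12 : α₂ ≤ α₁) (h23 : α₃ ≤ α₂) (h3 : 0 < α₃)
    (hd1 : d₁ ≤ 0) (hd3 : d₃ ≤ 0) (hd2 : 0 ≤ α₁ + α₃ + d₂)
    (m : Fin 3 → ℝ → ℝ) (hmc : ∀ j, ContinuousOn (m j) (Set.Ici (0 : ℝ)))
    (hm01 : ∀ t : ℝ, 0 ≤ t → m 1 t ≤ m 0 t) (hm12 : ∀ t : ℝ, 0 ≤ t → m 2 t ≤ m 1 t)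
    (hm2 : ∀ t : ℝ, 0 ≤ t → 0 < m 2 t)
    (y : ℝ → EuclideanSpace ℝ (Fin 3))
    (hy : ∀ i, ∀ t : ℝ, 0 ≤ t →
      HasDerivAt (fun s => y s i)
        (y t i * ∑ j, m j t * Bmat α₁ α₂ α₃ d₁ d₂ d₃ i j * (y t j) ^ 2) t) :
    AntitoneOn (fun t => ‖y t‖ ^ 2) (Set.Ici (0 : ℝ)) ∧
      ∀ t : ℝ, 0 ≤ t → ‖y t‖ ≤ ‖y 0‖ :=
  transformed_norm_nonincreasing_general α₁ α₂ α₃ d₁ d₂ d₃ h12 h23 h3 hd1 hd3 hd2 m hm01 hm12 hm2 y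
    hy
end
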